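/- arXiv:1902.09045 — 5 statements merged into one kernel-verified Lean document; each statement's English description precedes it below -/
import Mathlib

section
/- Let T be an ergodic measure-preserving transformation on a probability space, A a measurable set of positive measure, T_A the induced (first-return) transformation on A with return time n_A, and f : X → ℝ measurable. Define f_A(x) = ∑_{i=0}^{n_A(x)-1} f(T^i x) for x ∈ A. If f_A is a coboundary for T_A with transfer function g_A (i.e., f_A = g_A ∘ T_A - g_A on A), then f is a coboundary for T: the function g defined by g(T^j x) = g_A(x) + ∑_{i=0}^{j-1} f(T^i x) for x ∈ A and 0 ≤ j < n_A(x) satisfies f(x) = g(Tx) - g(x) for a.e. x ∈ X. -/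
open MeasureTheory Filter Topology Set

theorem stmt2 {X : Type*} [MeasurableSpace X] (μ : Measure X) [IsProbabilityMeasure μ]
    (T : X → X) (hT : Ergodic T μ)
    (hTinv : ∃ S : X → X, Measurable S ∧ MeasurePreserving S μ μ ∧
      Function.LeftInverse S T ∧ Function.RightInverse S T)
    (A : Set X) (hA : MeasurableSet A) (hApos : 0 < μ A)
    (nA : X → ℕ)
    (hnA : ∀ᵐ x ∂μ, x ∈ A →
      0 < nA x ∧ T^[nA x] x ∈ A ∧ ∀ k : ℕ, 0 < k → k < nA x → T^[k] x ∉ A)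
    (f gA g : X → ℝ) (hf : Measurable f) (hgA : Measurable gA) (hg : Measurable g)
    -- f_A is a coboundary for the induced transformation T_A with transfer function g_A
    (hcobA : ∀ᵐ x ∂μ, x ∈ A →
      (∑ i ∈ Finset.range (nA x), f (T^[i] x)) = gA (T^[nA x] x) - gA x)
    -- g is defined on the tower over A by the prescribed formula
    (hgdef : ∀ᵐ x ∂μ, x ∈ A → ∀ j : ℕ, j < nA x →
      g (T^[j] x) = gA x + ∑ i ∈ Finset.range j, f (T^[i] x)) :
    ∀ᵐ x ∂μ, f x = g (T x) - g x := by
  classical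
  obtain ⟨S, hSm, hSmp, hleft, hright⟩ := hTinv
  -- combined a.e. property
  set Q : X → Prop := fun x => x ∈ A →
      (0 < nA x ∧ T^[nA x] x ∈ A ∧ ∀ k : ℕ, 0 < k → k < nA x → T^[k] x ∉ A) ∧
      ((∑ i ∈ Finset.range (nA x), f (T^[i] x)) = gA (T^[nA x] x) - gA x) ∧
      (∀ j : ℕ, j < nA x → g (T^[j] x) = gA x + ∑ i ∈ Finset.range j, f (T^[i] x)) with hQdef
  have hQ : ∀ᵐ x ∂μ, Q x := by
    filter_upwards [hnA, hcobA, hgdef] with x h1 h2 h3 hxA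
    exact ⟨h1 hxA, h2 hxA, h3 hxA⟩
  have hQS : ∀ᵐ x ∂μ, ∀ n : ℕ, Q (S^[n] x) := by
    rw [ae_all_iff]
    intro n
    exact (hSmp.iterate n).quasiMeasurePreserving.ae hQ
  have hQT : ∀ᵐ x ∂μ, Q (T x) :=
    hT.toMeasurePreserving.quasiMeasurePreserving.ae hQ
  -- a.e. x eventually hits A under S
  have hhit : ∀ᵐ x ∂μ, ∃ n : ℕ, S^[n] x ∈ A := by
    set W : Set X := ⋃ n : ℕ, S^[n] ⁻¹' A with hW
    have hWm : MeasurableSet W := MeasurableSet.iUnion fun n => hA.preimage (hSm.iterate n)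
    have hsub : W ⊆ T ⁻¹' W := by
      rintro x ⟨_, ⟨n, rfl⟩, hx⟩
      refine mem_iUnion.2 ⟨n + 1, ?_⟩
      simpa [Function.iterate_succ_apply, hleft x] using hx
    have := hT.ae_empty_or_univ_of_ae_le_preimage hWm.nullMeasurableSet hsub.eventuallyLE
    rcases this with h | h
    · exfalso
      have hAW : A ⊆ W := fun x hx => mem_iUnion.2 ⟨0, hx⟩
      have : μ W = 0 := by simpa using h.measure_eq
      exact absurd (measure_mono_null hAW this) (by exact fun h0 => hApos.ne' h0)
    · filter_upwards [Filter.eventuallyEq_univ.mp h] with x hx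
      exact mem_iUnion.1 hx
  filter_upwards [hQS, hQT, hhit] with x hQSx hQTx hhitx
  set k := Nat.find hhitx with hk
  set y := S^[k] x with hy
  have hyA : y ∈ A := Nat.find_spec hhitx
  have hQy := hQSx k hyA
  obtain ⟨⟨hnpos, hret, hmin⟩, hcoby, hgy⟩ := hQy
  simp only [← hy] at hnpos hret hmin hcoby hgy
  have hxy : T^[k] y = x := (hright.iterate k) x
  -- intermediate points: for 0 < m ≤ k, T^[m] y = S^[k-m] x
  have hmid : ∀ m : ℕ, m ≤ k → T^[m] y = S^[k - m] x := by
    intro m hm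
    have : S^[k] x = S^[m] (S^[k - m] x) := by
      rw [← Function.iterate_add_apply]
      congr 1
      omega
    rw [hy, this, (hright.iterate m) (S^[k-m] x)]
  have hklt : k < nA y := by
    by_contra hle
    push_neg at hle
    rcases lt_or_eq_of_le hle with hlt | heq
    · -- nA y < k : T^[nA y] y = S^[k - nA y] x ∈ A with k - nA y < k, contra minimality
      have h1 := hmid (nA y) (le_of_lt hlt)
      have h2 : k - nA y < k := by omega
      exact Nat.find_min hhitx h2 (h1 ▸ hret)
    · -- nA y = k : x = T^[nA y] y ∈ A so k = 0, but nA y > 0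
      have hxA : x ∈ A := by rw [← hxy, ← heq]; exact hret
      have : k ≤ 0 := Nat.find_le (by simpa using hxA)
      omega
  have hgx : g x = gA y + ∑ i ∈ Finset.range k, f (T^[i] y) := by
    rw [← hxy]; exact hgy k hklt
  have hfx : f x = f (T^[k] y) := by rw [hxy]
  rcases lt_or_eq_of_le (Nat.succ_le_of_lt hklt) with hlt | heq
  · -- k + 1 < nA y
    have hTx : T x = T^[k+1] y := by
      rw [← hxy]; exact (Function.iterate_succ_apply' T k y).symm
    have hgTx : g (T x) = gA y + ∑ i ∈ Finset.range (k+1), f (T^[i] y) := by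
      rw [hTx]; exact hgy (k+1) hlt
    rw [hgTx, hgx, hfx, Finset.sum_range_succ]
    ring
  · -- k + 1 = nA y : T x ∈ A
    have hTx : T x = T^[nA y] y := by
      rw [← hxy, ← heq]; exact (Function.iterate_succ_apply' T k y).symm
    have hTxA : T x ∈ A := hTx ▸ hret
    obtain ⟨⟨hnpos', _, _⟩, _, hgTxdef⟩ := hQTx hTxA
    have hgTx : g (T x) = gA (T x) := by
      have := hgTxdef 0 hnpos'
      simpa using this
    have : gA (T x) = gA y + ∑ i ∈ Finset.range (nA y), f (T^[i] y) := by
      rw [hTx]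
      have := hcoby
      linarith [hcoby]
    rw [hgTx, this, hgx, hfx, ← heq, Finset.sum_range_succ]
    ring
end

section
/- Suppose f ∈ L^1 of a probability space satisfies ∫_X f dμ ≠ 0, and T is an ergodic invertible measure-preserving transformation. Then there is no measurable function g with f = g - g∘T almost everywhere. (Anosov's theorem.) -/
/-!
If `f = g - g ∘ T` a.e., the Birkhoff averages `Aₙ f = n⁻¹ ∑_{k<n} f ∘ T^k` telescope to
`n⁻¹ (g - g ∘ T^n)`, which tends to `0` in measure because `g ∘ T^n` has the same distribution as
`g`. On the other hand every `Aₙ f` has integral `∫ f`, and the `Aₙ f` are uniformly integrable,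
being averages of the identically distributed integrable functions `f ∘ T^k`. Vitali's convergence
theorem then gives `∫ f = lim ∫ Aₙ f = 0`.
-/

open MeasureTheory Filter Topology Set ProbabilityTheory
open scoped ENNReal

namespace MeasureTheory.MeasurePreserving

variable {α β γ : Type*} [MeasurableSpace α] [MeasurableSpace β] [MeasurableSpace γ]
  {μ : Measure α} {ν : Measure β} {T : α → β}

theorem identDistrib_comp (hT : MeasurePreserving T μ ν) {f : β → γ} (hf : AEMeasurable f ν) :
    IdentDistrib (f ∘ T) f μ ν where
  aemeasurable_fst := hf.comp_quasiMeasurePreserving hT.quasiMeasurePreserving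
  aemeasurable_snd := hf
  map_eq := by
    rw [← AEMeasurable.map_map_of_aemeasurable (hT.map_eq ▸ hf) hT.aemeasurable, hT.map_eq]

end MeasureTheory.MeasurePreserving

theorem birkhoffSum_sub_comp {α G : Type*} [AddCommGroup G] (T : α → α) (g : α → G) (n : ℕ)
    (x : α) : birkhoffSum T (g - g ∘ T) n x = g x - g (T^[n] x) := by
  simp only [birkhoffSum, Pi.sub_apply, Function.comp_apply, ← Function.iterate_succ_apply' T]
  exact Finset.sum_range_sub' (fun k => g (T^[k] x)) n

namespace MeasureTheory.TendstoInMeasure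

variable {α ι E : Type*} [MeasurableSpace α] {μ : Measure α} {l : Filter ι}

theorem sub [SeminormedAddCommGroup E] {f f' : ι → α → E} {g g' : α → E}
    (hf : TendstoInMeasure μ f l g) (hf' : TendstoInMeasure μ f' l g') :
    TendstoInMeasure μ (f - f') l (g - g') := by
  rw [tendstoInMeasure_iff_norm] at *
  intro ε hε
  have hsub : ∀ i, {x | ε ≤ ‖(f - f') i x - (g - g') x‖} ⊆
      {x | ε / 2 ≤ ‖f i x - g x‖} ∪ {x | ε / 2 ≤ ‖f' i x - g' x‖} := by
    intro i x hx
    by_contra! h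
    simp only [mem_union, mem_ofPred_eq, not_or, not_le] at h
    have := norm_sub_le (f i x - g x) (f' i x - g' x)
    rw [sub_sub_sub_comm] at this
    simp only [mem_ofPred_eq, Pi.sub_apply] at hx
    linarith
  have hsum := (hf (ε / 2) (half_pos hε)).add (hf' (ε / 2) (half_pos hε))
  rw [add_zero] at hsum
  exact tendsto_of_tendsto_of_tendsto_of_le_of_le tendsto_const_nhds hsum (fun _ => zero_le)
    fun i => (measure_mono (hsub i)).trans (measure_union_le _ _)

theorem congr_identDistrib [NormedAddCommGroup E] [MeasurableSpace E] [OpensMeasurableSpace E]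
    {f k : ι → α → E} (hk : TendstoInMeasure μ k l 0) (hfk : ∀ i, IdentDistrib (f i) (k i) μ μ) :
    TendstoInMeasure μ f l 0 := by
  rw [tendstoInMeasure_iff_norm] at *
  intro ε hε
  convert hk ε hε using 2 with i
  simpa using (hfk i).measure_mem_eq (s := {y : E | ε ≤ ‖y‖})
    (measurableSet_le measurable_const measurable_norm)

end MeasureTheory.TendstoInMeasure

theorem MeasureTheory.UnifIntegrable.inv_natCast_smul_sum_range {α E : Type*} [MeasurableSpace α]
    {μ : Measure α} [NormedAddCommGroup E] [NormedSpace ℝ E] {p : ℝ≥0∞} {F : ℕ → α → E}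
    (hF : UnifIntegrable F p μ) (hFm : ∀ i, AEStronglyMeasurable (F i) μ) (hp : 1 ≤ p) :
    UnifIntegrable (fun n : ℕ => (n : ℝ)⁻¹ • ∑ i ∈ Finset.range n, F i) p μ := by
  intro ε hε
  obtain ⟨δ, hδ, hFδ⟩ := hF hε
  refine ⟨δ, hδ, fun n s hs hμs => ?_⟩
  rcases eq_or_ne n 0 with rfl | hn
  · simp
  calc eLpNorm (s.indicator ((n : ℝ)⁻¹ • ∑ i ∈ Finset.range n, F i)) p μ
      = ‖(n : ℝ)⁻¹‖ₑ * eLpNorm (∑ i ∈ Finset.range n, s.indicator (F i)) p μ := by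
        rw [← eLpNorm_const_smul]
        congr 1
        ext x
        by_cases hx : x ∈ s <;> simp [hx, Finset.sum_apply]
    _ ≤ ‖(n : ℝ)⁻¹‖ₑ * ∑ i ∈ Finset.range n, eLpNorm (s.indicator (F i)) p μ := by
        gcongr
        exact eLpNorm_sum_le (fun i _ => (hFm i).indicator hs) hp
    _ ≤ ‖(n : ℝ)⁻¹‖ₑ * ∑ _i ∈ Finset.range n, ENNReal.ofReal ε := by
        gcongr with i
        exact hFδ i s hs hμs
    _ = ENNReal.ofReal ε := by
        rw [Finset.sum_const, Finset.card_range, nsmul_eq_mul, ← mul_assoc, enorm_inv (by simpa),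
          Real.enorm_natCast, ENNReal.inv_mul_cancel (by simpa) (by simp), one_mul]

namespace MeasureTheory.MeasurePreserving

variable {X : Type*} [MeasurableSpace X] {μ : Measure X} {T : X → X}

theorem integrable_birkhoffAverage (hT : MeasurePreserving T μ μ) {f : X → ℝ}
    (hf : Integrable f μ) (n : ℕ) : Integrable (birkhoffAverage ℝ T f n) μ :=
  (integrable_finsetSum _ fun k _ =>
    ((hT.iterate k).identDistrib_comp hf.aemeasurable).integrable_iff.2 hf).const_mul _

theorem integral_birkhoffAverage (hT : MeasurePreserving T μ μ) {f : X → ℝ} (hf : Integrable f μ)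
    {n : ℕ} (hn : n ≠ 0) : ∫ x, birkhoffAverage ℝ T f n x ∂μ = ∫ x, f x ∂μ := by
  have hident : ∀ k, IdentDistrib (fun x => f (T^[k] x)) f μ μ :=
    fun k => (hT.iterate k).identDistrib_comp hf.aemeasurable
  simp only [birkhoffAverage, birkhoffSum, smul_eq_mul]
  rw [integral_const_mul, integral_finsetSum _ fun k _ => (hident k).integrable_iff.2 hf]
  simp only [fun k => (hident k).integral_eq, Finset.sum_const, Finset.card_range, nsmul_eq_mul]
  field_simp

theorem unifIntegrable_birkhoffAverage [IsFiniteMeasure μ] (hT : MeasurePreserving T μ μ)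
    {f : X → ℝ} (hf : Integrable f μ) : UnifIntegrable (birkhoffAverage ℝ T f) 1 μ := by
  have hident : ∀ k, IdentDistrib (f ∘ T^[k]) f μ μ :=
    fun k => (hT.iterate k).identDistrib_comp hf.aemeasurable
  have hUI : UnifIntegrable (fun k => f ∘ T^[k]) 1 μ :=
    (MemLp.uniformIntegrable_of_identDistrib (j := 0) le_rfl ENNReal.one_ne_top
      (memLp_one_iff_integrable.2 hf) hident).unifIntegrable
  convert hUI.inv_natCast_smul_sum_range
    (fun k => ((hident k).integrable_iff.2 hf).aestronglyMeasurable) le_rfl using 1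
  ext n x
  simp [birkhoffAverage, birkhoffSum, Finset.sum_apply]

theorem tendstoInMeasure_birkhoffAverage_sub_comp [IsFiniteMeasure μ]
    (hT : MeasurePreserving T μ μ) {g : X → ℝ} (hg : AEMeasurable g μ) :
    TendstoInMeasure μ (birkhoffAverage ℝ T (g - g ∘ T)) atTop 0 := by
  set u : ℕ → X → ℝ := fun n x => (n : ℝ)⁻¹ * g x
  have hu : TendstoInMeasure μ u atTop 0 := by
    refine tendstoInMeasure_of_tendsto_ae (fun n => (hg.const_mul _).aestronglyMeasurable) ?_
    refine ae_of_all _ fun x => ?_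
    simpa using tendsto_inv_atTop_zero.comp tendsto_natCast_atTop_atTop |>.mul_const (g x)
  have hv : TendstoInMeasure μ (fun n => u n ∘ T^[n]) atTop 0 :=
    hu.congr_identDistrib fun n => (hT.iterate n).identDistrib_comp (hg.const_mul _)
  convert hu.sub hv using 1
  · ext n x
    simp [u, birkhoffAverage, birkhoffSum_sub_comp, mul_sub]
  · simp

theorem integral_eq_zero_of_ae_eq_sub_comp [IsFiniteMeasure μ] (hT : MeasurePreserving T μ μ)
    {f g : X → ℝ} (hf : Integrable f μ) (hg : AEMeasurable g μ) (hfg : f =ᵐ[μ] g - g ∘ T) :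
    ∫ x, f x ∂μ = 0 := by
  have hmeas : TendstoInMeasure μ (birkhoffAverage ℝ T f) atTop 0 :=
    (hT.tendstoInMeasure_birkhoffAverage_sub_comp hg).congr_left fun n =>
      (hT.quasiMeasurePreserving.birkhoffAverage_ae_eq_of_ae_eq ℝ hfg n).symm
  have hint := hT.integrable_birkhoffAverage hf
  have hL1 := tendsto_Lp_finite_of_tendstoInMeasure le_rfl ENNReal.one_ne_top
    (fun n => (hint n).aestronglyMeasurable) (memLp_const 0)
    (hT.unifIntegrable_birkhoffAverage hf) hmeas
  have hlim : Tendsto (fun n => ∫ x, birkhoffAverage ℝ T f n x ∂μ) atTop (𝓝 0) := by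
    simpa using tendsto_integral_of_L1' 0 aestronglyMeasurable_const
      (Eventually.of_forall hint) (by simpa [eLpNorm_one_eq_lintegral_enorm] using hL1)
  refine tendsto_nhds_unique (tendsto_const_nhds.congr' ?_) hlim
  filter_upwards [eventually_ne_atTop 0] with n hn
  exact (hT.integral_birkhoffAverage hf hn).symm

end MeasureTheory.MeasurePreserving

theorem stmt4_general {X : Type*} [MeasurableSpace X]
    (μ : Measure X) [IsProbabilityMeasure μ]
    (T : X → X) (hT : Ergodic T μ)
    (f : X → ℝ) (hf : Integrable f μ) (hmean : ∫ x, f x ∂μ ≠ 0) :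
    ¬ ∃ g : X → ℝ, Measurable g ∧ ∀ᵐ x ∂μ, f x = g x - g (T x) := by
  rintro ⟨g, hg, hfg⟩
  exact hmean (hT.toMeasurePreserving.integral_eq_zero_of_ae_eq_sub_comp hf hg.aemeasurable hfg)

theorem stmt4 {X : Type*} [MeasurableSpace X] [StandardBorelSpace X]
    (μ : Measure X) [IsProbabilityMeasure μ]
    (T : X → X) (hT : Ergodic T μ)
    (hTinv : ∃ S : X → X, Measurable S ∧ MeasurePreserving S μ μ ∧
      Function.LeftInverse S T ∧ Function.RightInverse S T)
    (f : X → ℝ) (hf : Integrable f μ) (hmean : ∫ x, f x ∂μ ≠ 0) :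
    ¬ ∃ g : X → ℝ, Measurable g ∧ ∀ᵐ x ∂μ, f x = g x - g (T x) :=
  stmt4_general μ T hT f hf hmean
end

section
/- Let f : X → ℝ be measurable. If there exist an ergodic invertible measure-preserving transformation T and a measurable function g with f = g − g∘T a.e., then ∫_{f>0} f dμ = ∫_{f<0} (−f) dμ, where both sides may be infinite. -/
/-!
Write `ofReal (a - b)` as the Lebesgue measure of `Ioc b a` and apply Tonelli: the integral of
the positive part of `g - g ∘ T` becomes `∫ μ({t ≤ g} \ T⁻¹{t ≤ g}) dt`, and that of the negative
part the same with the two sets swapped. Since `T` preserves the finite measure `μ`, the sets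
`{t ≤ g}` and `T⁻¹{t ≤ g}` have equal measure, hence so do their two differences.
-/

open MeasureTheory Filter Topology Set

theorem lintegral_ofReal_sub_eq_lintegral_measure {X : Type*} [MeasurableSpace X]
    (μ : Measure X) [SFinite μ] {u v : X → ℝ} (hu : Measurable u) (hv : Measurable v) :
    ∫⁻ x, ENNReal.ofReal (u x - v x) ∂μ = ∫⁻ t, μ {x | v x < t ∧ t ≤ u x} := by
  have hS : MeasurableSet {p : X × ℝ | v p.1 < p.2 ∧ p.2 ≤ u p.1} :=
    (measurableSet_lt (hv.comp measurable_fst) measurable_snd).inter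
      (measurableSet_le measurable_snd (hu.comp measurable_fst))
  calc ∫⁻ x, ENNReal.ofReal (u x - v x) ∂μ = ∫⁻ x, volume (Ioc (v x) (u x)) ∂μ := by
        simp only [Real.volume_Ioc]
    _ = ∫⁻ t, μ {x | v x < t ∧ t ≤ u x} := by
        exact (Measure.prod_apply hS).symm.trans (Measure.prod_apply_symm hS)

theorem MeasureTheory.MeasurePreserving.measure_sdiff_preimage_symm {X : Type*}
    [MeasurableSpace X] {μ : Measure X} [IsFiniteMeasure μ] {T : X → X}
    (hT : MeasurePreserving T μ μ) {A : Set X} (hA : MeasurableSet A) :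
    μ (A \ T ⁻¹' A) = μ (T ⁻¹' A \ A) :=
  measure_sdiff_symm hA.nullMeasurableSet (hT.measurable hA).nullMeasurableSet
    (hT.measure_preimage hA.nullMeasurableSet).symm (measure_ne_top _ _)

theorem MeasureTheory.MeasurePreserving.lintegral_ofReal_sub_comp_symm {X : Type*}
    [MeasurableSpace X] {μ : Measure X} [IsFiniteMeasure μ] {T : X → X}
    (hT : MeasurePreserving T μ μ) {g : X → ℝ} (hg : Measurable g) :
    ∫⁻ x, ENNReal.ofReal (g x - g (T x)) ∂μ = ∫⁻ x, ENNReal.ofReal (g (T x) - g x) ∂μ := by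
  have hgT : Measurable fun x => g (T x) := hg.comp hT.measurable
  rw [lintegral_ofReal_sub_eq_lintegral_measure μ hg hgT,
    lintegral_ofReal_sub_eq_lintegral_measure μ hgT hg]
  refine lintegral_congr fun t => ?_
  have hA : MeasurableSet {x | t ≤ g x} := measurableSet_le measurable_const hg
  convert hT.measure_sdiff_preimage_symm hA using 2 <;>
    ext x <;> simp [and_comm]

theorem stmt6_general {X : Type*} [MeasurableSpace X]
    (μ : Measure X) [IsProbabilityMeasure μ]
    (f : X → ℝ)
    (T : X → X) (hT : Ergodic T μ)
    (g : X → ℝ) (hg : Measurable g)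
    (hcob : ∀ᵐ x ∂μ, f x = g x - g (T x)) :
    ∫⁻ x in {x | 0 < f x}, ENNReal.ofReal (f x) ∂μ =
      ∫⁻ x in {x | f x < 0}, ENNReal.ofReal (-f x) ∂μ := by
  rw [setLIntegral_eq_of_support_subset fun x hx => ?pos,
    setLIntegral_eq_of_support_subset fun x hx => ?neg]
  case pos => by_contra h; exact hx (ENNReal.ofReal_eq_zero.2 (not_lt.1 h))
  case neg => by_contra h; exact hx (ENNReal.ofReal_eq_zero.2 (by simpa using h))
  calc ∫⁻ x, ENNReal.ofReal (f x) ∂μ = ∫⁻ x, ENNReal.ofReal (g x - g (T x)) ∂μ :=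
        lintegral_congr_ae (hcob.mono fun x hx => by simp only [hx])
    _ = ∫⁻ x, ENNReal.ofReal (g (T x) - g x) ∂μ :=
        hT.toMeasurePreserving.lintegral_ofReal_sub_comp_symm hg
    _ = ∫⁻ x, ENNReal.ofReal (-f x) ∂μ :=
        lintegral_congr_ae (hcob.mono fun x hx => by simp only [hx, neg_sub])

theorem stmt6 {X : Type*} [MeasurableSpace X] [StandardBorelSpace X]
    (μ : Measure X) [IsProbabilityMeasure μ]
    (f : X → ℝ) (hf : Measurable f)
    (T : X → X) (hT : Ergodic T μ)
    (hTinv : ∃ S : X → X, Measurable S ∧ MeasurePreserving S μ μ ∧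
      Function.LeftInverse S T ∧ Function.RightInverse S T)
    (g : X → ℝ) (hg : Measurable g)
    (hcob : ∀ᵐ x ∂μ, f x = g x - g (T x)) :
    ∫⁻ x in {x | 0 < f x}, ENNReal.ofReal (f x) ∂μ =
      ∫⁻ x in {x | f x < 0}, ENNReal.ofReal (-f x) ∂μ :=
  stmt6_general μ f T hT g hg hcob
end

section
/- Fix p ≥ 1 and an increasing sequence a_i → ∞ of positive reals satisfying a_i / a_{i+1}^α → 0 for all α > 0. With u_i, v_i, G^p_n as defined, the set G^p_n is dense in L^p_0 for every n ∈ ℕ. -/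
/-!
Approximate `f ∈ L^p_0` within `δ` by a bounded simple function `s`, `|s| ≤ M`, and pick `i > n`
so large that `a_{i-1} ≥ M + 1` and `i² > (2/δ)^p`. On a set `A` of measure `(δ/t)^p`, with
`t = a_i + M + 1`, add the spike `t`; it costs at most `δ` in `L^p` and pushes the function above
`a_i` on `A`, while `μ A > 1/(a_i^p i²)`. Subtracting the mean restores `∫ = 0` at a further
cost of at most the `L^p` distance to `f`, and keeps the function above `-a_{i-1}` everywhere.
Sets of every measure in `(0, 1)` exist because the distribution function of a nonatomic
probability measure on `ℝ`, to which a standard Borel space reduces, is continuous.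
-/

open MeasureTheory Filter Topology Set ProbabilityTheory
open scoped ENNReal

theorem StieltjesFunction.continuous_of_nullSingletonClass (f : StieltjesFunction ℝ)
    [NullSingletonClass f.measure] : Continuous f := by
  refine continuous_iff_continuousAt.2 fun x => ?_
  have hleft : Function.leftLim f x = f x := by
    have h : f.measure {x} = 0 := NullSingletonClass.measure_singleton x
    rw [f.measure_singleton, ENNReal.ofReal_eq_zero, sub_nonpos] at h
    exact le_antisymm (f.mono.leftLim_le le_rfl) h
  rw [f.mono.continuousAt_iff_leftLim_eq_rightLim, hleft, f.rightLim_eq]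

theorem ProbabilityTheory.continuous_cdf (ν : Measure ℝ) [IsProbabilityMeasure ν]
    [NullSingletonClass ν] : Continuous (cdf ν) :=
  have : NullSingletonClass (cdf ν).measure := by rwa [measure_cdf]
  (cdf ν).continuous_of_nullSingletonClass

theorem ProbabilityTheory.exists_measure_Iic_eq (ν : Measure ℝ) [IsProbabilityMeasure ν]
    [NullSingletonClass ν] {m : ℝ} (hm : m ∈ Ioo 0 1) :
    ∃ t, ν (Iic t) = ENNReal.ofReal m := by
  obtain ⟨x₁, hx₁⟩ := ((tendsto_cdf_atBot ν).eventually_lt_const hm.1).exists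
  obtain ⟨x₂, hx₂⟩ := ((tendsto_cdf_atTop ν).eventually_const_lt hm.2).exists
  obtain ⟨t, ht⟩ := intermediate_value_univ x₁ x₂ (continuous_cdf ν) ⟨hx₁.le, hx₂.le⟩
  exact ⟨t, by rw [← ofReal_cdf, ht]⟩

namespace MeasureTheory

theorem exists_measurableSet_measure_eq {X : Type*} [MeasurableSpace X]
    [StandardBorelSpace X] (μ : Measure X) [IsProbabilityMeasure μ] [NullSingletonClass μ]
    {m : ℝ} (hm : m ∈ Ioo 0 1) : ∃ A, MeasurableSet A ∧ μ A = ENNReal.ofReal m := by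
  obtain ⟨e, he⟩ := exists_measurableEmbedding_real X
  have := Measure.isProbabilityMeasure_map (μ := μ) he.measurable.aemeasurable
  have : NullSingletonClass (μ.map e) := ⟨fun y => by
    rw [he.map_apply]
    exact Set.Subsingleton.measure_zero (fun _ hx _ hy => he.injective (hx.trans hy.symm)) μ⟩
  obtain ⟨t, ht⟩ := exists_measure_Iic_eq (μ.map e) hm
  exact ⟨e ⁻¹' Iic t, he.measurable measurableSet_Iic, by rwa [← he.map_apply]⟩

theorem eLpNorm_indicator_const_le_of_measure_eq {X : Type*} [MeasurableSpace X]
    {μ : Measure X} {A : Set X} {p δ t : ℝ} (hp : 0 < p) (hδ : 0 ≤ δ) (ht : 0 < t)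
    (hA : μ A = ENNReal.ofReal ((δ / t) ^ p)) :
    eLpNorm (A.indicator fun _ => t) (ENNReal.ofReal p) μ ≤ ENNReal.ofReal δ := by
  refine (eLpNorm_indicator_const_le _ _).trans_eq ?_
  rw [hA, ENNReal.toReal_ofReal hp.le,
    ENNReal.ofReal_rpow_of_nonneg (by positivity) (by positivity),
    ← Real.rpow_mul (by positivity), mul_one_div_cancel hp.ne', Real.rpow_one,
    Real.enorm_eq_ofReal ht.le, ← ENNReal.ofReal_mul ht.le, mul_div_cancel₀ _ ht.ne']

section Probability

variable {X E : Type*} [MeasurableSpace X] {μ : Measure X} [IsProbabilityMeasure μ]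
  [NormedAddCommGroup E] [NormedSpace ℝ E] {p : ℝ≥0∞}

theorem enorm_integral_le_eLpNorm (hp : 1 ≤ p) {u : X → E} (hu : AEStronglyMeasurable u μ) :
    ‖∫ x, u x ∂μ‖ₑ ≤ eLpNorm u p μ :=
  calc ‖∫ x, u x ∂μ‖ₑ ≤ eLpNorm u 1 μ := by
        rw [eLpNorm_one_eq_lintegral_enorm]; exact enorm_integral_le_lintegral_enorm u
    _ ≤ eLpNorm u p μ := eLpNorm_le_eLpNorm_of_exponent_le hp hu

theorem enorm_integral_le_eLpNorm_sub (hp : 1 ≤ p) {f h : X → E} (hf : MemLp f p μ)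
    (hh : MemLp h p μ) (hf0 : ∫ x, f x ∂μ = 0) :
    ‖∫ x, h x ∂μ‖ₑ ≤ eLpNorm (h - f) p μ := by
  have hint : ∫ x, (h - f) x ∂μ = ∫ x, h x ∂μ := by
    rw [Pi.sub_def, integral_sub (hh.integrable hp) (hf.integrable hp), hf0, sub_zero]
  rw [← hint]
  exact enorm_integral_le_eLpNorm hp (hh.sub hf).aestronglyMeasurable

theorem eLpNorm_sub_integral_sub_le (hp : 1 ≤ p) {f h : X → E} (hf : MemLp f p μ)
    (hh : MemLp h p μ) (hf0 : ∫ x, f x ∂μ = 0) :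
    eLpNorm ((fun x => h x - ∫ y, h y ∂μ) - f) p μ ≤ 2 * eLpNorm (h - f) p μ := by
  have hsplit : (fun x => h x - ∫ y, h y ∂μ) - f = (h - f) - fun _ => ∫ y, h y ∂μ := by
    ext x; simp only [Pi.sub_apply]; abel
  calc eLpNorm ((fun x => h x - ∫ y, h y ∂μ) - f) p μ
      ≤ eLpNorm (h - f) p μ + eLpNorm (fun _ => ∫ y, h y ∂μ) p μ := by
        rw [hsplit]
        exact eLpNorm_sub_le (hh.sub hf).aestronglyMeasurable aestronglyMeasurable_const hp
    _ ≤ eLpNorm (h - f) p μ + eLpNorm (h - f) p μ := by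
        rw [eLpNorm_const _ (by positivity) (IsProbabilityMeasure.ne_zero μ), measure_univ,
          ENNReal.one_rpow, mul_one]
        gcongr
        exact enorm_integral_le_eLpNorm_sub hp hf hh hf0
    _ = 2 * eLpNorm (h - f) p μ := (two_mul _).symm

theorem exists_centered_perturbation (hp : 1 ≤ p) {f s : X → ℝ} (hf : MemLp f p μ)
    (hf0 : ∫ x, f x ∂μ = 0) (hs : MemLp s p μ) {M δ t : ℝ} (hM : ∀ x, ‖s x‖ ≤ M)
    (hδ : δ ≤ 1 / 2) (hfs : eLpNorm (f - s) p μ < ENNReal.ofReal δ) {A : Set X}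
    (hA : MeasurableSet A) (ht : 0 ≤ t)
    (hAt : eLpNorm (A.indicator fun _ => t) p μ ≤ ENNReal.ofReal δ) :
    ∃ g, MemLp g p μ ∧ ∫ x, g x ∂μ = 0 ∧ eLpNorm (g - f) p μ < ENNReal.ofReal (4 * δ) ∧
      (∀ x ∈ A, t - M - 1 < g x) ∧ ∀ x, -(M + 1) < g x := by
  have hδ0 : 0 < δ := ENNReal.ofReal_pos.1 (pos_of_gt hfs)
  set h := s + A.indicator fun _ => t
  have hhx : ∀ x, h x = s x + A.indicator (fun _ => t) x := fun _ => rfl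
  have hind : MemLp (A.indicator fun _ => t) p μ := (memLp_const t).indicator hA
  have hh : MemLp h p μ := hs.add hind
  have hhf : eLpNorm (h - f) p μ < ENNReal.ofReal (2 * δ) := calc
    eLpNorm (h - f) p μ = eLpNorm ((s - f) + A.indicator fun _ => t) p μ := by
        congr 1; ext x; simp only [h, Pi.add_apply, Pi.sub_apply]; ring
    _ ≤ eLpNorm (s - f) p μ + eLpNorm (A.indicator fun _ => t) p μ :=
        eLpNorm_add_le (hs.sub hf).1 hind.1 hp
    _ < ENNReal.ofReal δ + ENNReal.ofReal δ := by
        rw [eLpNorm_sub_comm]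
        exact ENNReal.add_lt_add_of_lt_of_le hind.eLpNorm_ne_top hfs hAt
    _ = ENNReal.ofReal (2 * δ) := by rw [← ENNReal.ofReal_add hδ0.le hδ0.le, two_mul]
  have hκ : |∫ x, h x ∂μ| < 1 := by
    have := (enorm_integral_le_eLpNorm_sub hp hf hh hf0).trans_lt hhf
    rw [Real.enorm_eq_ofReal_abs, ENNReal.ofReal_lt_ofReal_iff'] at this
    linarith [this.1]
  set κ := ∫ x, h x ∂μ
  refine ⟨fun x => h x - κ, hh.sub (memLp_const _), ?_, ?_, fun x hx => ?_, fun x => ?_⟩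
  · rw [integral_sub (hh.integrable hp) (integrable_const _), integral_const]; simp [κ]
  · calc _ ≤ 2 * eLpNorm (h - f) p μ := eLpNorm_sub_integral_sub_le hp hf hh hf0
      _ < 2 * ENNReal.ofReal (2 * δ) := ENNReal.mul_lt_mul_right (by norm_num) (by norm_num) hhf
      _ = ENNReal.ofReal (4 * δ) := by
        rw [← ENNReal.ofReal_ofNat 2, ← ENNReal.ofReal_mul zero_le_two]; ring_nf
  · have := abs_le.1 (Real.norm_eq_abs _ ▸ hM x)
    show t - M - 1 < h x - κ
    rw [hhx, indicator_of_mem hx]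
    linarith [abs_lt.1 hκ]
  · have := abs_le.1 (Real.norm_eq_abs _ ▸ hM x)
    have : 0 ≤ A.indicator (fun _ => t) x := indicator_nonneg (fun _ _ => ht) x
    show -(M + 1) < h x - κ
    rw [hhx]
    linarith [abs_lt.1 hκ]

end Probability

end MeasureTheory

theorem one_div_rpow_mul_sq_lt_div_rpow {p δ t b i : ℝ} (hp : 0 < p) (hδ : 0 < δ) (ht : 0 < t)
    (htb : t ≤ 2 * b) (hi : (2 / δ) ^ p < i ^ 2) : 1 / (b ^ p * i ^ 2) < (δ / t) ^ p := by
  have hb : 0 < b := by linarith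
  have hi0 : 0 < i ^ 2 := (Real.rpow_pos_of_pos (by positivity) p).trans hi
  have hδi : 1 / i ^ 2 < (δ / 2) ^ p := by
    rw [one_div_lt hi0 (by positivity), one_div, ← Real.inv_rpow (by positivity), inv_div]
    exact hi
  calc 1 / (b ^ p * i ^ 2) = (1 / i ^ 2) / b ^ p := by ring
    _ < (δ / 2) ^ p / b ^ p := div_lt_div_of_pos_right hδi (by positivity)
    _ = (δ / (2 * b)) ^ p := by rw [← Real.div_rpow (by positivity) hb.le, div_div]
    _ ≤ (δ / t) ^ p := by gcongr

theorem Filter.Tendsto.exists_large_index {a : ℕ → ℝ} (ha : Tendsto a atTop atTop) (n : ℕ)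
    (K L : ℝ) :
    ∃ i : ℕ, n < i ∧ K ≤ a (i - 1) ∧ K ≤ a i ∧ L < (i : ℝ) ^ 2 :=
  ((eventually_gt_atTop n).and <|
    ((ha.comp (tendsto_sub_atTop_nat 1)).eventually_ge_atTop K).and <|
    (ha.eventually_ge_atTop K).and <|
    ((tendsto_pow_atTop two_ne_zero).comp tendsto_natCast_atTop_atTop).eventually_gt_atTop L).exists

/-- The condition defining `G^p_n`, for a function rather than an element of `L^p`. -/
def SpikesAfter {X : Type*} [MeasurableSpace X] (μ : Measure X) (a : ℕ → ℝ) (p : ℝ) (n : ℕ)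
    (g : X → ℝ) : Prop :=
  ∃ i : ℕ, n < i ∧
    ENNReal.ofReal (1 / ((a i) ^ p * (i : ℝ) ^ 2)) < μ {x | a i < g x} ∧
    μ {x | g x < -(a (i - 1))} < ENNReal.ofReal (1 / ((a (i + 1)) ^ p * (i : ℝ) ^ 2))

section SpikesAfter

variable {X : Type*} [MeasurableSpace X] {μ : Measure X} {a : ℕ → ℝ} {p : ℝ} {n : ℕ}

theorem SpikesAfter.congr_ae {g g' : X → ℝ} (hg : SpikesAfter μ a p n g) (h : g =ᵐ[μ] g') :
    SpikesAfter μ a p n g' := by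
  obtain ⟨i, hni, hup, hdown⟩ := hg
  refine ⟨i, hni, hup.trans_eq (measure_congr ?_), (measure_congr ?_).trans_lt hdown⟩
  · exact h.mono fun x hx => congrArg (a i < ·) hx
  · exact h.mono fun x hx => congrArg (· < -a (i - 1)) hx.symm

theorem spikesAfter_of_bounds (hpos : ∀ i, 0 < a i) {g : X → ℝ} {A : Set X} {i : ℕ}
    (hni : n < i) (hμA : ENNReal.ofReal (1 / ((a i) ^ p * (i : ℝ) ^ 2)) < μ A)
    (hgA : ∀ x ∈ A, a i < g x) (hg : ∀ x, -a (i - 1) ≤ g x) : SpikesAfter μ a p n g := by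
  have hempty : {x | g x < -a (i - 1)} = ∅ :=
    eq_empty_of_forall_notMem fun x (hx : g x < _) => (hg x).not_gt hx
  refine ⟨i, hni, hμA.trans_le (measure_mono hgA), ?_⟩
  rw [hempty, measure_empty, ENNReal.ofReal_pos]
  have := hpos (i + 1)
  have : (0 : ℝ) < i := by exact_mod_cast (Nat.zero_le n).trans_lt hni
  positivity

theorem exists_spikesAfter_near [StandardBorelSpace X] [IsProbabilityMeasure μ]
    [NullSingletonClass μ] (hp : 1 ≤ p) (hpos : ∀ i, 0 < a i) (htend : Tendsto a atTop atTop)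
    {f : X → ℝ} (hf : MemLp f (ENNReal.ofReal p) μ) (hf0 : ∫ x, f x ∂μ = 0) {ε : ℝ}
    (hε : 0 < ε) :
    ∃ g, MemLp g (ENNReal.ofReal p) μ ∧ ∫ x, g x ∂μ = 0 ∧
      eLpNorm (g - f) (ENNReal.ofReal p) μ < ENNReal.ofReal ε ∧ SpikesAfter μ a p n g := by
  have hp0 : 0 < p := one_pos.trans_le hp
  set δ := min (ε / 4) (1 / 2)
  have hδ : 0 < δ := by positivity
  obtain ⟨s, hfs, hs⟩ := hf.exists_simpleFunc_eLpNorm_sub_lt ENNReal.ofReal_ne_top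
    (ENNReal.ofReal_pos.2 hδ).ne'
  obtain ⟨M, hM⟩ := s.exists_forall_norm_le
  have hM0 : 0 ≤ M := (norm_nonneg _).trans (hM (nonempty_of_isProbabilityMeasure μ).some)
  obtain ⟨i, hni, hMi', hMi, hi⟩ := htend.exists_large_index n (M + 1) ((2 / δ) ^ p)
  set t := a i + M + 1 with ht_def
  have ht : 0 < t := by linarith
  have hδt : δ / t < 1 := (div_lt_one ht).2 (by linarith [min_le_right (ε / 4) (1 / 2)])
  obtain ⟨A, hA, hμA⟩ := exists_measurableSet_measure_eq μ (m := (δ / t) ^ p)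
    ⟨by positivity, Real.rpow_lt_one (by positivity) hδt hp0⟩
  obtain ⟨g, hg, hg0, hgf, hgA, hg_lb⟩ :=
    exists_centered_perturbation (ENNReal.one_le_ofReal.2 hp) hf hf0 hs hM (min_le_right _ _)
      hfs hA ht.le (eLpNorm_indicator_const_le_of_measure_eq hp0 hδ.le ht hμA)
  refine ⟨g, hg, hg0, hgf.trans_le (ENNReal.ofReal_le_ofReal ?_), spikesAfter_of_bounds hpos hni
    ?_ (fun x hx => by linarith [hgA x hx]) (fun x => by linarith [hg_lb x])⟩
  · linarith [min_le_left (ε / 4) (1 / 2)]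
  · rw [hμA, ENNReal.ofReal_lt_ofReal_iff (by positivity)]
    exact one_div_rpow_mul_sq_lt_div_rpow hp0 hδ ht (by linarith) hi

end SpikesAfter

theorem stmt9_general {X : Type*} [MeasurableSpace X] [StandardBorelSpace X]
    (μ : Measure X) [IsProbabilityMeasure μ] [NullSingletonClass μ]
    (p : ℝ) (hp : 1 ≤ p) [Fact (1 ≤ ENNReal.ofReal p)]
    (a : ℕ → ℝ) (hpos : ∀ i, 0 < a i)
    (htend : Tendsto a atTop atTop)
    (n : ℕ) :
    Dense {f : {f : Lp ℝ (ENNReal.ofReal p) μ // ∫ x, f x ∂μ = 0} |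
      ∃ i : ℕ, n < i ∧
        ENNReal.ofReal (1 / ((a i) ^ p * (i : ℝ) ^ 2)) < μ {x | a i < f.1 x} ∧
        μ {x | f.1 x < -(a (i - 1))} <
          ENNReal.ofReal (1 / ((a (i + 1)) ^ p * (i : ℝ) ^ 2))} := by
  rw [Metric.dense_iff]
  rintro ⟨f, hf0⟩ ε hε
  obtain ⟨g, hg, hg0, hgf, hspikes⟩ :=
    exists_spikesAfter_near (n := n) hp hpos htend (Lp.memLp f) hf0 hε
  have hG := hg.coeFn_toLp
  refine ⟨⟨hg.toLp g, by rwa [integral_congr_ae hG]⟩, ?_, hspikes.congr_ae hG.symm⟩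
  rw [Metric.mem_ball, Subtype.dist_eq, Lp.dist_def, eLpNorm_congr_ae (hG.sub .rfl)]
  exact ENNReal.toReal_lt_of_lt_ofReal hgf

theorem stmt9 {X : Type*} [MeasurableSpace X] [StandardBorelSpace X]
    (μ : Measure X) [IsProbabilityMeasure μ] [NullSingletonClass μ]
    (p : ℝ) (hp : 1 ≤ p) [Fact (1 ≤ ENNReal.ofReal p)]
    (a : ℕ → ℝ) (hpos : ∀ i, 0 < a i) (hmono : StrictMono a)
    (htend : Tendsto a atTop atTop)
    (hfast : ∀ α : ℝ, 0 < α → Tendsto (fun i => a i / (a (i + 1)) ^ α) atTop (𝓝 0))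
    (n : ℕ) :
    Dense {f : {f : Lp ℝ (ENNReal.ofReal p) μ // ∫ x, f x ∂μ = 0} |
      ∃ i : ℕ, n < i ∧
        ENNReal.ofReal (1 / ((a i) ^ p * (i : ℝ) ^ 2)) < μ {x | a i < f.1 x} ∧
        μ {x | f.1 x < -(a (i - 1))} <
          ENNReal.ofReal (1 / ((a (i + 1)) ^ p * (i : ℝ) ^ 2))} :=
  stmt9_general μ p hp a hpos htend n
end

section
/- Suppose f ≥ −1 a.e. on a probability space and T is measure-preserving. Then for every n ≥ 0 and every r ≥ 1, ‖∑_{i=0}^{n} f∘T^i‖_r^r ≥ (n+1) ∫_{f>n} (f−n)^r dμ. -/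
/-!
Write `S = ∑_{i ≤ n} f ∘ Tⁱ`. At a point where every `f (Tⁱ x) ≥ -1`, the positive parts
`(f (Tⁱ x) - n)⁺` sum to at most `|S x|`: if one of the `n + 1` terms exceeds `n`, its excess over
`n` pays for the at most `n` other terms, each of which is at least `-1`. Since `t ↦ t ^ r` is
superadditive on `[0, ∞]` for `r ≥ 1`, also `∑ᵢ (f (Tⁱ x) - n)⁺ ^ r ≤ |S x| ^ r`. Integrating, the
left side becomes `(n + 1) ∫ (f - n)⁺ ^ r` because `T` preserves `μ`.
-/

open MeasureTheory Filter Topology Set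
open scoped ENNReal

theorem ENNReal.sum_rpow_le_rpow_sum {ι : Type*} (s : Finset ι) (g : ι → ℝ≥0∞) {r : ℝ}
    (hr : 1 ≤ r) : ∑ i ∈ s, g i ^ r ≤ (∑ i ∈ s, g i) ^ r := by
  induction s using Finset.cons_induction with
  | empty => simp [ENNReal.zero_rpow_of_pos (zero_lt_one.trans_le hr)]
  | cons a s ha ih =>
    rw [Finset.sum_cons, Finset.sum_cons]
    calc g a ^ r + ∑ i ∈ s, g i ^ r ≤ g a ^ r + (∑ i ∈ s, g i) ^ r := by gcongr
      _ ≤ (g a + ∑ i ∈ s, g i) ^ r := ENNReal.add_rpow_le_rpow_add _ _ hr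

theorem sum_max_sub_le_abs_sum {ι : Type*} {s : Finset ι} {a : ι → ℝ} {n : ℕ}
    (hs : s.card ≤ n + 1) (ha : ∀ i ∈ s, -1 ≤ a i) :
    ∑ i ∈ s, max (a i - n) 0 ≤ |∑ i ∈ s, a i| := by
  by_cases hbig : ∃ j ∈ s, (n : ℝ) < a j
  · obtain ⟨j, hj, hnj⟩ := hbig
    have hpt : ∀ i ∈ s,
        max (a i - n) 0 ≤ a i + 1 - (n + 1) * if (n : ℝ) < a i then 1 else 0 := by
      intro i hi
      split_ifs with h
      · rw [max_eq_left (by linarith)]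
        linarith
      · rw [max_eq_right (by linarith)]
        linarith [ha i hi]
    have hcount : (1 : ℝ) ≤ ∑ i ∈ s, if (n : ℝ) < a i then 1 else 0 := by
      simpa [hnj] using Finset.single_le_sum
        (f := fun i => if (n : ℝ) < a i then (1 : ℝ) else 0) (fun i _ => by positivity) hj
    have hcard : (s.card : ℝ) ≤ n + 1 := by exact_mod_cast hs
    calc ∑ i ∈ s, max (a i - n) 0
        ≤ ∑ i ∈ s, (a i + 1 - (n + 1) * if (n : ℝ) < a i then 1 else 0) :=
          Finset.sum_le_sum hpt
      _ = ∑ i ∈ s, a i + s.card - (n + 1) * ∑ i ∈ s, if (n : ℝ) < a i then 1 else 0 := by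
          rw [Finset.sum_sub_distrib, Finset.sum_add_distrib, ← Finset.mul_sum]
          simp
      _ ≤ ∑ i ∈ s, a i := by nlinarith
      _ ≤ |∑ i ∈ s, a i| := le_abs_self _
  · push Not at hbig
    rw [Finset.sum_eq_zero fun i hi => max_eq_right (by linarith [hbig i hi])]
    exact abs_nonneg _

theorem sum_ofReal_sub_rpow_le_enorm_sum_rpow {ι : Type*} {s : Finset ι} {a : ι → ℝ} {n : ℕ}
    (hs : s.card ≤ n + 1) (ha : ∀ i ∈ s, -1 ≤ a i) {r : ℝ} (hr : 1 ≤ r) :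
    ∑ i ∈ s, ENNReal.ofReal (a i - n) ^ r ≤ ‖∑ i ∈ s, a i‖ₑ ^ r :=
  calc ∑ i ∈ s, ENNReal.ofReal (a i - n) ^ r
      ≤ (∑ i ∈ s, ENNReal.ofReal (a i - n)) ^ r := ENNReal.sum_rpow_le_rpow_sum _ _ hr
    _ = ENNReal.ofReal (∑ i ∈ s, max (a i - n) 0) ^ r := by
        rw [ENNReal.ofReal_sum_of_nonneg fun i _ => le_max_right _ _]
        simp
    _ ≤ ‖∑ i ∈ s, a i‖ₑ ^ r := by
        rw [Real.enorm_eq_ofReal_abs]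
        gcongr
        exact sum_max_sub_le_abs_sum hs ha

section

variable {α : Type*} [MeasurableSpace α] {μ : Measure α}

theorem MeasureTheory.MeasurePreserving.lintegral_birkhoffSum {T : α → α}
    (hT : MeasurePreserving T μ μ) {g : α → ℝ≥0∞} (hg : Measurable g) (n : ℕ) :
    ∫⁻ x, birkhoffSum T g n x ∂μ = n * ∫⁻ x, g x ∂μ := by
  simp only [birkhoffSum]
  rw [lintegral_finsetSum (f := fun i x => g (T^[i] x)) _
    fun i _ => hg.comp (hT.iterate i).measurable]
  simp [(hT.iterate _).lintegral_comp hg]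

theorem setLIntegral_ofReal_sub_rpow_eq_lintegral {h : α → ℝ} (hh : Measurable h) (c : ℝ)
    {r : ℝ} (hr : 0 < r) :
    ∫⁻ x in {x | c < h x}, ENNReal.ofReal ((h x - c) ^ r) ∂μ =
      ∫⁻ x, ENNReal.ofReal (h x - c) ^ r ∂μ := by
  rw [← setLIntegral_eq_of_support_subset (s := {x | c < h x})
    (f := fun x => ENNReal.ofReal (h x - c) ^ r)]
  · refine setLIntegral_congr_fun (measurableSet_lt measurable_const hh) fun x hx => ?_
    rw [ENNReal.ofReal_rpow_of_nonneg (sub_nonneg.2 (le_of_lt hx)) hr.le]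
  · refine fun x hx => show c < h x from not_le.1 fun hle => hx ?_
    simp [ENNReal.ofReal_of_nonpos (sub_nonpos.2 hle), ENNReal.zero_rpow_of_pos hr]

theorem eLpNorm_ofReal_rpow_eq_lintegral {ε : Type*} [ENorm ε] {f : α → ε} {r : ℝ}
    (hr : 0 < r) : eLpNorm f (ENNReal.ofReal r) μ ^ r = ∫⁻ x, ‖f x‖ₑ ^ r ∂μ := by
  have h := eLpNorm_nnreal_pow_eq_lintegral (f := f) (μ := μ) (p := r.toNNReal)
    (by simpa using hr)
  rwa [Real.coe_toNNReal _ hr.le] at h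

end

theorem stmt17_general {X : Type*} [MeasurableSpace X] (μ : Measure X)
    (T : X → X) (hT : MeasurePreserving T μ μ)
    (f : X → ℝ) (hfm : Measurable f) (hfbd : ∀ᵐ x ∂μ, -1 ≤ f x)
    (r : ℝ) (hr : 1 ≤ r) :
    ∀ n : ℕ,
      ((n : ENNReal) + 1) *
          ∫⁻ x in {x | (n : ℝ) < f x}, ENNReal.ofReal ((f x - n) ^ r) ∂μ ≤
        (eLpNorm (fun x => ∑ i ∈ Finset.range (n + 1), f (T^[i] x))
          (ENNReal.ofReal r) μ) ^ r := by
  intro n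
  have hr0 : 0 < r := zero_lt_one.trans_le hr
  set g : X → ℝ≥0∞ := fun x => ENNReal.ofReal (f x - n) ^ r
  have hgm : Measurable g := (ENNReal.measurable_ofReal.comp (hfm.sub_const _)).pow_const r
  have hbd : ∀ᵐ x ∂μ, ∀ i, -1 ≤ f (T^[i] x) :=
    ae_all_iff.2 fun i => (hT.iterate i).quasiMeasurePreserving.ae hfbd
  have hpt : ∀ᵐ x ∂μ, birkhoffSum T g (n + 1) x ≤ ‖birkhoffSum T f (n + 1) x‖ₑ ^ r := by
    filter_upwards [hbd] with x hx
    exact sum_ofReal_sub_rpow_le_enorm_sum_rpow (by simp) (fun i _ => hx i) hr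
  rw [setLIntegral_ofReal_sub_rpow_eq_lintegral hfm _ hr0, eLpNorm_ofReal_rpow_eq_lintegral hr0]
  calc ((n : ℝ≥0∞) + 1) * ∫⁻ x, g x ∂μ = ∫⁻ x, birkhoffSum T g (n + 1) x ∂μ := by
        rw [hT.lintegral_birkhoffSum hgm]
        push_cast
        rfl
    _ ≤ _ := lintegral_mono_ae hpt

theorem stmt17 {X : Type*} [MeasurableSpace X] (μ : Measure X) [IsProbabilityMeasure μ]
    (T : X → X) (hT : MeasurePreserving T μ μ)
    (f : X → ℝ) (hfm : Measurable f) (hfbd : ∀ᵐ x ∂μ, -1 ≤ f x)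
    (r : ℝ) (hr : 1 ≤ r) :
    ∀ n : ℕ,
      ((n : ENNReal) + 1) *
          ∫⁻ x in {x | (n : ℝ) < f x}, ENNReal.ofReal ((f x - n) ^ r) ∂μ ≤
        (eLpNorm (fun x => ∑ i ∈ Finset.range (n + 1), f (T^[i] x))
          (ENNReal.ofReal r) μ) ^ r :=
  stmt17_general μ T hT f hfm hfbd r hr
end
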